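/- The group G is torsion-free: every element g ∈ G with g ≠ 1 has infinite order. -/

import Mathlib

-- The generators `a` and `b` of the iterated monodromy group of `z^2-1`,
-- as functions on binary words (`false` = x = left, `true` = y = right),
-- defined by mutual recursion.
mutual
def aFun : List Bool → List Bool
  | [] => []
  | false :: w => true :: bFun w
  | true :: w => false :: w

def bFun : List Bool → List Bool
  | [] => []
  | false :: w => false :: aFun w
  | true :: w => true :: w
end

-- The inverses of `aFun`/`bFun`.
mutual
def aInv : List Bool → List Bool
  | [] => []
  | true :: w => false :: bInv w
  | false :: w => true :: w

def bInv : List Bool → List Bool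
  | [] => []
  | false :: w => false :: aInv w
  | true :: w => true :: w
end

mutual
theorem aFun_aInv : ∀ w, aFun (aInv w) = w
  | [] => rfl
  | true :: w => by simp [aInv, aFun, bFun_bInv w]
  | false :: w => by simp [aInv, aFun]

theorem bFun_bInv : ∀ w, bFun (bInv w) = w
  | [] => rfl
  | false :: w => by simp [bInv, bFun, aFun_aInv w]
  | true :: w => by simp [bInv, bFun]
end

mutual
theorem aInv_aFun : ∀ w, aInv (aFun w) = w
  | [] => rfl
  | false :: w => by simp [aFun, aInv, bInv_bFun w]
  | true :: w => by simp [aFun, aInv]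

theorem bInv_bFun : ∀ w, bInv (bFun w) = w
  | [] => rfl
  | false :: w => by simp [bFun, bInv, aInv_aFun w]
  | true :: w => by simp [bFun, bInv]
end

/-- `a` as a permutation of the set of binary words. -/
def aPerm : Equiv.Perm (List Bool) := ⟨aFun, aInv, aInv_aFun, aFun_aInv⟩
/-- `b` as a permutation of the set of binary words. -/
def bPerm : Equiv.Perm (List Bool) := ⟨bFun, bInv, bInv_bFun, bFun_bInv⟩

mutual
theorem aFun_length : ∀ w, (aFun w).length = w.length
  | [] => rfl
  | false :: w => by simp [aFun, bFun_length w]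
  | true :: w => by simp [aFun]

theorem bFun_length : ∀ w, (bFun w).length = w.length
  | [] => rfl
  | false :: w => by simp [bFun, aFun_length w]
  | true :: w => by simp [bFun]
end

mutual
theorem aFun_prefix : ∀ u v, u <+: v → aFun u <+: aFun v
  | [], v, _ => by simp [aFun]
  | false :: u, false :: v, h => by
      simp only [List.cons_prefix_cons] at h
      simpa [aFun, List.cons_prefix_cons] using bFun_prefix u v h.2
  | true :: u, true :: v, h => by
      simp only [List.cons_prefix_cons] at h
      simpa [aFun, List.cons_prefix_cons] using h.2
  | false :: u, true :: v, h => by simp [List.cons_prefix_cons] at h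
  | true :: u, false :: v, h => by simp [List.cons_prefix_cons] at h
  | _ :: u, [], h => by simp at h

theorem bFun_prefix : ∀ u v, u <+: v → bFun u <+: bFun v
  | [], v, _ => by simp [bFun]
  | false :: u, false :: v, h => by
      simp only [List.cons_prefix_cons] at h
      simpa [bFun, List.cons_prefix_cons] using aFun_prefix u v h.2
  | true :: u, true :: v, h => by
      simp only [List.cons_prefix_cons] at h
      simpa [bFun, List.cons_prefix_cons] using h.2
  | false :: u, true :: v, h => by simp [List.cons_prefix_cons] at h
  | true :: u, false :: v, h => by simp [List.cons_prefix_cons] at h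
  | _ :: u, [], h => by simp at h
end

/-- The group of automorphisms of the binary rooted tree: bijections of the set of
binary words preserving word length and the prefix relation. -/
def treeAut : Subgroup (Equiv.Perm (List Bool)) where
  carrier := {f | (∀ w, (f w).length = w.length) ∧ ∀ u v : List Bool, u <+: v → f u <+: f v}
  one_mem' := ⟨fun _ => rfl, fun _ _ h => h⟩
  mul_mem' := by
    rintro f g ⟨hf1, hf2⟩ ⟨hg1, hg2⟩
    exact ⟨fun w => (hf1 _).trans (hg1 w), fun u v h => hf2 _ _ (hg2 _ _ h)⟩
  inv_mem' := by
    rintro f ⟨hf1, hf2⟩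
    constructor
    · intro w
      have := hf1 (f⁻¹ w)
      simpa using this.symm
    · intro u v h
      have hlen : (f⁻¹ u).length ≤ (f⁻¹ v).length := by
        have h1 : (f⁻¹ u).length = u.length := by have := hf1 (f⁻¹ u); simpa using this.symm
        have h2 : (f⁻¹ v).length = v.length := by have := hf1 (f⁻¹ v); simpa using this.symm
        rw [h1, h2]; exact h.length_le
      set p := (f⁻¹ v).take (f⁻¹ u).length with hp
      have hpv : p <+: f⁻¹ v := List.take_prefix _ _
      have hplen : p.length = (f⁻¹ u).length := by
        simp [hp, List.length_take]; exact hlen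
      have hfp : f p <+: v := by
        have := hf2 _ _ hpv
        simpa using this
      have hfplen : (f p).length = u.length := by
        rw [hf1 p, hplen]
        have := hf1 (f⁻¹ u); simpa using this.symm
      have : f p = u := by
        rcases List.prefix_or_prefix_of_prefix hfp h with h' | h'
        · exact h'.eq_of_length hfplen
        · exact (h'.eq_of_length hfplen.symm).symm
      have : p = f⁻¹ u := by
        have := congrArg (f⁻¹ : Equiv.Perm (List Bool)) this
        simpa using this
      rw [← this]; exact hpv

/-- The generator `a` as a tree automorphism. -/
def A : treeAut := ⟨aPerm, aFun_length, aFun_prefix⟩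
/-- The generator `b` as a tree automorphism. -/
def B : treeAut := ⟨bPerm, bFun_length, bFun_prefix⟩

/-- The iterated monodromy group of `z ↦ z² - 1`: the subgroup of the automorphism
group of the binary rooted tree generated by `a` and `b`. -/
def G : Subgroup treeAut := Subgroup.closure {A, B}

/-- Apply a tree automorphism to a binary word. -/
def app (g : treeAut) (w : List Bool) : List Bool := g.val w


/-! ### Auxiliary development: sections, level-swap parities -/

theorem tlen (g : treeAut) (w : List Bool) : (g.1 w).length = w.length := g.2.1 w

theorem tpref (g : treeAut) {u v : List Bool} (h : u <+: v) : g.1 u <+: g.1 v := g.2.2 u v h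

theorem treeAut_ext {g h : treeAut} (H : ∀ w, g.1 w = h.1 w) : g = h :=
  Subtype.ext (Equiv.ext H)

theorem mul_apply' (g h : treeAut) (w : List Bool) : (g * h).1 w = g.1 (h.1 w) := rfl

theorem one_apply' (w : List Bool) : (1 : treeAut).1 w = w := rfl

theorem inv_apply' (g : treeAut) (w : List Bool) : g⁻¹.1 (g.1 w) = w := by
  have : (g⁻¹ * g).1 w = w := by rw [inv_mul_cancel]; rfl
  rwa [mul_apply'] at this

/-- The letter to which `g` sends the single-letter word `[c]`. -/
def gl (g : treeAut) (c : Bool) : Bool := (g.1 [c]).headI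

theorem apply_single (g : treeAut) (c : Bool) : g.1 [c] = [gl g c] := by
  have h := tlen g [c]
  obtain ⟨x, hx⟩ := List.length_eq_one_iff.mp h
  rw [gl, hx]; rfl

/-- The section of `g` at the one-letter word `[c]`, as a bare function. -/
def secF (g : treeAut) (c : Bool) (w : List Bool) : List Bool := (g.1 (c :: w)).tail

theorem apply_cons (g : treeAut) (c : Bool) (w : List Bool) :
    g.1 (c :: w) = gl g c :: secF g c w := by
  have hp : g.1 [c] <+: g.1 (c :: w) := tpref g ⟨w, rfl⟩
  rw [apply_single] at hp
  obtain ⟨t, ht⟩ := hp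
  rw [secF, ← ht]; rfl

theorem secF_length (g : treeAut) (c : Bool) (w : List Bool) :
    (secF g c w).length = w.length := by
  have h := tlen g (c :: w)
  rw [apply_cons] at h
  simpa using h

theorem secF_prefix (g : treeAut) (c : Bool) (u v : List Bool) (h : u <+: v) :
    secF g c u <+: secF g c v := by
  have h1 : g.1 (c :: u) <+: g.1 (c :: v) := tpref g (List.cons_prefix_cons.mpr ⟨rfl, h⟩)
  rw [apply_cons, apply_cons] at h1
  exact (List.cons_prefix_cons.mp h1).2

theorem gl_inv_gl (g : treeAut) (c : Bool) : gl g⁻¹ (gl g c) = c := by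
  have : g⁻¹.1 [gl g c] = [c] := by rw [← apply_single g c, inv_apply']
  rw [gl, this]; rfl

/-- The section of `g` at the one-letter word `[c]`, as a tree automorphism. -/
def secT (g : treeAut) (c : Bool) : treeAut :=
  ⟨⟨secF g c, secF g⁻¹ (gl g c),
    fun w => by
      show secF g⁻¹ (gl g c) (secF g c w) = w
      rw [secF, ← apply_cons, inv_apply']; rfl,
    fun w => by
      show secF g c (secF g⁻¹ (gl g c) w) = w
      have h1 : g⁻¹.1 (gl g c :: w) = c :: secF g⁻¹ (gl g c) w := by
        rw [apply_cons, gl_inv_gl]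
      have h2 : g.1 (c :: secF g⁻¹ (gl g c) w) = gl g c :: w := by
        rw [← h1]
        have : g.1 (g⁻¹.1 (gl g c :: w)) = gl g c :: w := by
          have := inv_apply' g⁻¹ (gl g c :: w)
          rwa [inv_inv] at this
        exact this
      rw [secF, h2]; rfl⟩,
   secF_length g c, secF_prefix g c⟩

theorem secT_apply (g : treeAut) (c : Bool) (w : List Bool) : (secT g c).1 w = secF g c w := rfl

theorem gl_one (c : Bool) : gl (1 : treeAut) c = c := rfl

theorem secT_one (c : Bool) : secT (1 : treeAut) c = 1 := treeAut_ext fun _ => rfl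

theorem gl_mul (g h : treeAut) (c : Bool) : gl (g * h) c = gl g (gl h c) := by
  have : (g * h).1 [c] = [gl g (gl h c)] := by
    rw [mul_apply', apply_single h, apply_single g]
  rw [gl, this]; rfl

theorem secT_mul (g h : treeAut) (c : Bool) :
    secT (g * h) c = secT g (gl h c) * secT h c := by
  refine treeAut_ext fun w => ?_
  show secF (g * h) c w = secF g (gl h c) (secF h c w)
  rw [secF, mul_apply', apply_cons h, apply_cons g]; rfl

theorem gl_true_eq (g : treeAut) : gl g true = ! gl g false := by
  have hne : g.1 [true] ≠ g.1 [false] := fun h => by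
    have := g.1.injective h
    simp at this
  rw [apply_single, apply_single] at hne
  have : gl g true ≠ gl g false := fun h => hne (by rw [h])
  revert this
  cases gl g true <;> cases gl g false <;> simp

theorem gl_gl_inv (g : treeAut) (c : Bool) : gl g (gl g⁻¹ c) = c := by
  have := gl_inv_gl g⁻¹ c
  rwa [inv_inv] at this

theorem secT_inv (g : treeAut) (c : Bool) : secT g⁻¹ (gl g c) = (secT g c)⁻¹ := by
  have h : secT g⁻¹ (gl g c) * secT g c = 1 := by
    have := secT_mul g⁻¹ g c
    rw [inv_mul_cancel, secT_one] at this
    exact this.symm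
  exact eq_inv_of_mul_eq_one_left h

theorem secT_inv' (g : treeAut) (c : Bool) : secT g⁻¹ c = (secT g (gl g⁻¹ c))⁻¹ := by
  have := secT_inv g (gl g⁻¹ c)
  rwa [gl_gl_inv] at this

theorem secT_pow (g : treeAut) (c : Bool) (hc : gl g c = c) (m : ℕ) :
    secT (g ^ m) c = (secT g c) ^ m := by
  induction m with
  | zero => rw [pow_zero, pow_zero, secT_one]
  | succ m ih => rw [pow_succ, pow_succ, secT_mul, hc, ih]

/-- Parity of the number of level-`n` vertices at which `g` swaps the two subtrees. -/
def epar : ℕ → treeAut → ZMod 2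
  | 0, g => if gl g false then 1 else 0
  | n + 1, g => epar n (secT g false) + epar n (secT g true)

theorem epar_one (n : ℕ) : epar n (1 : treeAut) = 0 := by
  induction n with
  | zero => simp [epar, gl_one]
  | succ n ih => simp [epar, secT_one, ih]

theorem epar_mul (n : ℕ) (g h : treeAut) : epar n (g * h) = epar n g + epar n h := by
  induction n generalizing g h with
  | zero =>
    show (if gl (g * h) false then 1 else 0) = _
    rw [gl_mul]
    rcases hf : gl h false with _ | _
    · show _ = _ + (if gl h false then (1 : ZMod 2) else 0)
      rw [hf]; simp [epar]
    · show _ = _ + (if gl h false then (1 : ZMod 2) else 0)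
      rw [hf, gl_true_eq]
      show (if !gl g false then (1 : ZMod 2) else 0) =
        (if gl g false then (1 : ZMod 2) else 0) + if true then 1 else 0
      cases gl g false <;> simp <;> decide
  | succ n ih =>
    show epar n (secT (g * h) false) + epar n (secT (g * h) true) = _
    rw [secT_mul, secT_mul, ih, ih, gl_true_eq]
    show _ = (epar n (secT g false) + epar n (secT g true)) +
      (epar n (secT h false) + epar n (secT h true))
    cases hf : gl h false <;> simp <;> ring

theorem epar_inv (n : ℕ) (g : treeAut) : epar n g⁻¹ = epar n g := by
  have h := epar_mul n g⁻¹ g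
  rw [inv_mul_cancel, epar_one] at h
  have h2 : ∀ x y : ZMod 2, 0 = x + y → x = y := by decide
  exact h2 _ _ h

theorem epar_pow (n m : ℕ) (g : treeAut) : epar n (g ^ m) = m • epar n g := by
  induction m with
  | zero => rw [pow_zero, epar_one, zero_smul]
  | succ m ih => rw [pow_succ, epar_mul, ih, succ_nsmul]

theorem secT_A_false : secT A false = B := treeAut_ext fun _ => rfl
theorem secT_A_true : secT A true = 1 := treeAut_ext fun _ => rfl
theorem secT_B_false : secT B false = A := treeAut_ext fun _ => rfl
theorem secT_B_true : secT B true = 1 := treeAut_ext fun _ => rfl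

theorem epar_succ_A (n : ℕ) : epar (n + 1) A = epar n B := by
  show epar n (secT A false) + epar n (secT A true) = _
  rw [secT_A_false, secT_A_true, epar_one, add_zero]

theorem epar_succ_B (n : ℕ) : epar (n + 1) B = epar n A := by
  show epar n (secT B false) + epar n (secT B true) = _
  rw [secT_B_false, secT_B_true, epar_one, add_zero]

theorem epar_two_eq_zero_of_mem (g : treeAut) (hg : g ∈ G) : epar 2 g = epar 0 g := by
  induction hg using Subgroup.closure_induction'' with
  | one => rw [epar_one, epar_one]
  | mem x hx =>
    rcases hx with h | h <;> subst h
    · rw [epar_succ_A 1, epar_succ_B 0]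
    · rw [epar_succ_B 1, epar_succ_A 0]
  | inv_mem x hx =>
    rcases hx with h | h <;> subst h
    · rw [epar_inv, epar_inv, epar_succ_A 1, epar_succ_B 0]
    · rw [epar_inv, epar_inv, epar_succ_B 1, epar_succ_A 0]
  | mul x y hx hy ihx ihy => rw [epar_mul, epar_mul, ihx, ihy]

theorem secT_mem (g : treeAut) (hg : g ∈ G) (c : Bool) : secT g c ∈ G := by
  induction hg using Subgroup.closure_induction'' generalizing c with
  | one => rw [secT_one]; exact one_mem G
  | mem x hx =>
    rcases hx with h | h <;> subst h <;> cases c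
    · rw [secT_A_false]; exact Subgroup.subset_closure (Or.inr rfl)
    · rw [secT_A_true]; exact one_mem G
    · rw [secT_B_false]; exact Subgroup.subset_closure (Or.inl rfl)
    · rw [secT_B_true]; exact one_mem G
  | inv_mem x hx =>
    rcases hx with h | h <;> subst h
    · rw [secT_inv']
      refine inv_mem ?_
      rcases gl A⁻¹ c with _ | _
      · rw [secT_A_false]; exact Subgroup.subset_closure (Or.inr rfl)
      · rw [secT_A_true]; exact one_mem G
    · rw [secT_inv']
      refine inv_mem ?_
      rcases gl B⁻¹ c with _ | _
      · rw [secT_B_false]; exact Subgroup.subset_closure (Or.inl rfl)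
      · rw [secT_B_true]; exact one_mem G
  | mul x y hx hy ihx ihy =>
    rw [secT_mul]
    exact mul_mem (ihx _) (ihy _)

theorem gl_false_of_sq (g : treeAut) (hg : g ∈ G) (h2 : g * g = 1) : gl g false = false := by
  by_contra h
  rw [Bool.not_eq_false] at h
  have hgt : gl g true = false := by rw [gl_true_eq, h]; rfl
  have hsec : secT g true * secT g false = 1 := by
    have := secT_mul g g false
    rw [h2, secT_one, h] at this
    exact this.symm
  have hinv : secT g true = (secT g false)⁻¹ := eq_inv_of_mul_eq_one_left hsec
  have h2g : epar 2 g = 0 := by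
    show epar 1 (secT g false) + epar 1 (secT g true) = 0
    rw [hinv, epar_inv]
    have hxx : ∀ x : ZMod 2, x + x = 0 := by decide
    exact hxx _
  have h0g : epar 0 g = 1 := by
    show (if gl g false then (1 : ZMod 2) else 0) = 1
    rw [h]; rfl
  have := epar_two_eq_zero_of_mem g hg
  rw [h2g, h0g] at this
  exact absurd this (by decide)

theorem fix_nil (g : treeAut) : g.1 [] = [] := List.length_eq_zero_iff.mp (tlen g [])

theorem gl_eq_self (g : treeAut) (hf : gl g false = false) (c : Bool) : gl g c = c := by
  cases c
  · exact hf
  · rw [gl_true_eq, hf]; rfl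

theorem secT_sq (g : treeAut) (h2 : g * g = 1) (c : Bool) (hc : gl g c = c) :
    secT g c * secT g c = 1 := by
  have := secT_mul g g c
  rw [h2, secT_one, hc] at this
  exact this.symm

theorem sq_fix : ∀ (k : ℕ) (g : treeAut), g ∈ G → g * g = 1 →
    ∀ w : List Bool, w.length ≤ k → g.1 w = w := by
  intro k
  induction k with
  | zero =>
    intro g _ _ w hw
    have : w = [] := List.length_eq_zero_iff.mp (Nat.le_zero.mp hw)
    rw [this]; exact fix_nil g
  | succ k ih =>
    intro g hg h2 w hw
    cases w with
    | nil => exact fix_nil g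
    | cons c w' =>
      have hgc : gl g c = c := gl_eq_self g (gl_false_of_sq g hg h2) c
      rw [apply_cons, hgc]
      have hlen : w'.length ≤ k := by simpa using hw
      have := ih (secT g c) (secT_mem g hg c) (secT_sq g h2 c hgc) w' hlen
      rw [secT_apply] at this
      rw [this]

theorem G_sq_eq_one (g : treeAut) (hg : g ∈ G) (h2 : g * g = 1) : g = 1 :=
  treeAut_ext fun w => sq_fix w.length g hg h2 w le_rfl

theorem odd_smul_zmod2 (m : ℕ) (hm : Odd m) (x : ZMod 2) : m • x = x := by
  obtain ⟨r, hr⟩ := hm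
  subst hr
  have hxx : ∀ y : ZMod 2, y + y = 0 := by decide
  rw [add_nsmul, one_nsmul, two_mul, add_nsmul, hxx, zero_add]

theorem gl_false_of_odd (m : ℕ) (hm : Odd m) (g : treeAut) (h : g ^ m = 1) :
    gl g false = false := by
  have h0 : epar 0 g = 0 := by
    have := epar_pow 0 m g
    rw [h, epar_one, odd_smul_zmod2 m hm] at this
    exact this.symm
  by_contra hc
  rw [Bool.not_eq_false] at hc
  have : epar 0 g = 1 := by
    show (if gl g false then (1 : ZMod 2) else 0) = 1
    rw [hc]; rfl
  rw [h0] at this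
  exact absurd this (by decide)

theorem odd_fix (m : ℕ) (hm : Odd m) : ∀ (k : ℕ) (g : treeAut), g ^ m = 1 →
    ∀ w : List Bool, w.length ≤ k → g.1 w = w := by
  intro k
  induction k with
  | zero =>
    intro g _ w hw
    have : w = [] := List.length_eq_zero_iff.mp (Nat.le_zero.mp hw)
    rw [this]; exact fix_nil g
  | succ k ih =>
    intro g hgm w hw
    cases w with
    | nil => exact fix_nil g
    | cons c w' =>
      have hgc : gl g c = c := gl_eq_self g (gl_false_of_odd m hm g hgm) c
      rw [apply_cons, hgc]
      have hsec : (secT g c) ^ m = 1 := by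
        rw [← secT_pow g c hgc, hgm, secT_one]
      have hlen : w'.length ≤ k := by simpa using hw
      have := ih (secT g c) hsec w' hlen
      rw [secT_apply] at this
      rw [this]

theorem odd_pow_eq_one (m : ℕ) (hm : Odd m) (g : treeAut) (h : g ^ m = 1) : g = 1 :=
  treeAut_ext fun w => odd_fix m hm w.length g h w le_rfl

theorem pow_eq_one_imp : ∀ (m : ℕ) (g : treeAut), g ∈ G → 0 < m → g ^ m = 1 → g = 1 := by
  intro m
  induction m using Nat.strong_induction_on with
  | _ m ih =>
    intro g hg hm hgm
    rcases Nat.even_or_odd m with he | ho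
    · obtain ⟨r, hr⟩ := he
      subst hr
      have hr0 : 0 < r := by omega
      have hsq : g ^ r * g ^ r = 1 := by rw [← pow_add, hgm]
      have := G_sq_eq_one (g ^ r) (pow_mem hg r) hsq
      exact ih r (by omega) g hg hr0 this
    · exact odd_pow_eq_one m ho g hgm

/-- `G` is torsion-free: every nontrivial element of `G` has infinite order. -/
theorem G_torsion_free (g : treeAut) (hg : g ∈ G) (hne : g ≠ 1) : ¬ IsOfFinOrder g := by
  intro hfin
  obtain ⟨m, hm, hgm⟩ := isOfFinOrder_iff_pow_eq_one.mp hfin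
  exact hne (pow_eq_one_imp m g hg hm hgm)
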